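/- Let 𝕜 be a field, A, B, C vector spaces over 𝕜, and v ∈ A ⊗ B ⊗ C. Then: (i) dim U_{AB}(v) ≤ dim U_A(v) · dim U_B(v); and (ii) dim U_A(v) ≤ dim U_{AB}(v) · dim U_B(v). (These are the necessary compatibility conditions, r_α ≤ ∏_{β∈S(α)} r_β and r_δ ≤ r_α ∏_{β∈S(α), β≠δ} r_β, satisfied by the tree-based rank of any tensor at a node α with sons A and B.) -/

import Mathlib

open scoped TensorProduct

section
variable (𝕜 : Type*) [Field 𝕜]

/-- The contraction `id_V ⊗ φ : V ⊗ W → V`, sending `x ⊗ y` to `φ(y) • x`. -/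
noncomputable def rContract (V W : Type*) [AddCommGroup V] [Module 𝕜 V]
    [AddCommGroup W] [Module 𝕜 W] (φ : W →ₗ[𝕜] 𝕜) : V ⊗[𝕜] W →ₗ[𝕜] V :=
  (TensorProduct.rid 𝕜 V).toLinearMap ∘ₗ TensorProduct.map LinearMap.id φ

/-- The contraction `ψ ⊗ id_W : V ⊗ W → W`, sending `x ⊗ y` to `ψ(x) • y`. -/
noncomputable def lContract (V W : Type*) [AddCommGroup V] [Module 𝕜 V]
    [AddCommGroup W] [Module 𝕜 W] (ψ : V →ₗ[𝕜] 𝕜) : V ⊗[𝕜] W →ₗ[𝕜] W :=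
  (TensorProduct.lid 𝕜 W).toLinearMap ∘ₗ TensorProduct.map ψ LinearMap.id

/-- The left minimal subspace `U_V(v)` of `v ∈ V ⊗ W`: the span of all contractions
`(id_V ⊗ φ)(v)` with `φ` in the algebraic dual of `W`. -/
noncomputable def leftMin (V W : Type*) [AddCommGroup V] [Module 𝕜 V]
    [AddCommGroup W] [Module 𝕜 W] (v : V ⊗[𝕜] W) : Submodule 𝕜 V :=
  Submodule.span 𝕜 {x | ∃ φ : W →ₗ[𝕜] 𝕜, rContract 𝕜 V W φ v = x}

/-- The right minimal subspace `U_W(v)` of `v ∈ V ⊗ W`: the span of all contractions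
`(ψ ⊗ id_W)(v)` with `ψ` in the algebraic dual of `V`. -/
noncomputable def rightMin (V W : Type*) [AddCommGroup V] [Module 𝕜 V]
    [AddCommGroup W] [Module 𝕜 W] (v : V ⊗[𝕜] W) : Submodule 𝕜 W :=
  Submodule.span 𝕜 {y | ∃ ψ : V →ₗ[𝕜] 𝕜, lContract 𝕜 V W ψ v = y}

end

section
variable (𝕜 A B C : Type*) [Field 𝕜] [AddCommGroup A] [Module 𝕜 A]
  [AddCommGroup B] [Module 𝕜 B] [AddCommGroup C] [Module 𝕜 C]

/-- The minimal subspace `U_{AB}(v) ≤ A ⊗ B` of `v ∈ (A ⊗ B) ⊗ C`. -/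
noncomputable def minAB (v : (A ⊗[𝕜] B) ⊗[𝕜] C) : Submodule 𝕜 (A ⊗[𝕜] B) :=
  leftMin 𝕜 (A ⊗[𝕜] B) C v

/-- The minimal subspace `U_A(v) ≤ A` of `v ∈ (A ⊗ B) ⊗ C`, obtained by contracting
`B ⊗ C` via the associativity isomorphism. -/
noncomputable def minA (v : (A ⊗[𝕜] B) ⊗[𝕜] C) : Submodule 𝕜 A :=
  leftMin 𝕜 A (B ⊗[𝕜] C) (TensorProduct.assoc 𝕜 A B C v)

/-- The minimal subspace `U_B(v) ≤ B` of `v ∈ (A ⊗ B) ⊗ C`, obtained by contracting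
the factors `A` and `C`. -/
noncomputable def minB (v : (A ⊗[𝕜] B) ⊗[𝕜] C) : Submodule 𝕜 B :=
  Submodule.span 𝕜
    {y | ∃ (ψ : A →ₗ[𝕜] 𝕜) (φ : C →ₗ[𝕜] 𝕜),
      lContract 𝕜 A B ψ (rContract 𝕜 (A ⊗[𝕜] B) C φ v) = y}

end

/-!
For `v ∈ V ⊗ W`, expanding `v` along a basis of `V` gives coefficients that are contractions of
`v`, so `U_W(v)` is the smallest subspace `S` with `v ∈ V ⊗ S`; together with the symmetric fact
and the extension of functionals from `U_V(v)` to `V`, this gives `v ∈ U_V(v) ⊗ U_W(v)`.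

(i) Every generator `w` of `U_{AB}(v)` has left and right minimal subspaces inside `U_A(v)` and
`U_B(v)`, so `U_{AB}(v) ≤ U_A(v) ⊗ U_B(v)`.
(ii) Write `v = ∑ᵢ bᵢ ⊗ cᵢ` over a basis `(bᵢ)` of `U_{AB}(v)` and `bᵢ = ∑ⱼ aᵢⱼ ⊗ eⱼ` over a
basis `(eⱼ)` of `U_B(v)`. Then `v = ∑ᵢⱼ aᵢⱼ ⊗ (eⱼ ⊗ cᵢ)` in `A ⊗ (B ⊗ C)`, so `U_A(v)` lies in
the span of the `dim U_{AB}(v) · dim U_B(v)` vectors `aᵢⱼ`.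
-/

section Contraction
variable {𝕜 V W : Type*} [Field 𝕜] [AddCommGroup V] [Module 𝕜 V]
  [AddCommGroup W] [Module 𝕜 W]

@[simp] lemma rContract_tmul (φ : W →ₗ[𝕜] 𝕜) (x : V) (y : W) :
    rContract 𝕜 V W φ (x ⊗ₜ y) = φ y • x := by
  simp [rContract]

@[simp] lemma lContract_tmul (ψ : V →ₗ[𝕜] 𝕜) (x : V) (y : W) :
    lContract 𝕜 V W ψ (x ⊗ₜ y) = ψ x • y := by
  simp [lContract]

lemma lContract_rTensor {V' : Type*} [AddCommGroup V'] [Module 𝕜 V'] (ψ : V →ₗ[𝕜] 𝕜)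
    (f : V' →ₗ[𝕜] V) (u : V' ⊗[𝕜] W) :
    lContract 𝕜 V W ψ (f.rTensor W u) = lContract 𝕜 V' W (ψ ∘ₗ f) u := by
  induction u using TensorProduct.induction_on with
  | zero => simp
  | tmul x y => simp
  | add u₁ u₂ h₁ h₂ => simp only [map_add, h₁, h₂]

lemma lContract_lTensor {W' : Type*} [AddCommGroup W'] [Module 𝕜 W'] (ψ : V →ₗ[𝕜] 𝕜)
    (f : W' →ₗ[𝕜] W) (u : V ⊗[𝕜] W') :
    lContract 𝕜 V W ψ (f.lTensor V u) = f (lContract 𝕜 V W' ψ u) := by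
  induction u using TensorProduct.induction_on with
  | zero => simp
  | tmul x y => simp
  | add u₁ u₂ h₁ h₂ => simp only [map_add, h₁, h₂]

lemma leftMin_sum_tmul_le {ι : Type*} [Fintype ι] (x : ι → V) (y : ι → W) :
    leftMin 𝕜 V W (∑ i, x i ⊗ₜ y i) ≤ Submodule.span 𝕜 (Set.range x) := by
  rw [leftMin, Submodule.span_le]
  rintro _ ⟨φ, rfl⟩
  simp only [map_sum, rContract_tmul]
  exact Submodule.sum_mem _ fun i _ ↦ Submodule.smul_mem _ _ (Submodule.subset_span ⟨i, rfl⟩)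

lemma finiteDimensional_leftMin (v : V ⊗[𝕜] W) : FiniteDimensional 𝕜 (leftMin 𝕜 V W v) := by
  obtain ⟨k, x, y, rfl⟩ := TensorProduct.exists_sum_tmul_eq v
  have := FiniteDimensional.span_of_finite 𝕜 (Set.finite_range x)
  exact Submodule.finiteDimensional_of_le (leftMin_sum_tmul_le x y)

lemma mem_range_rTensor_leftMin (v : V ⊗[𝕜] W) :
    v ∈ LinearMap.range ((leftMin 𝕜 V W v).subtype.rTensor W) := by
  classical
  let b := Module.Basis.ofVectorSpace 𝕜 W
  set c := TensorProduct.equivFinsuppOfBasisRight b v with hc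
  have hmem (i) : c i ∈ leftMin 𝕜 V W v :=
    Submodule.subset_span ⟨b.coord i, (TensorProduct.equivFinsuppOfBasisRight_apply b v i).symm⟩
  have hsum : c.sum (fun i x ↦ x ⊗ₜ b i) ∈
      LinearMap.range ((leftMin 𝕜 V W v).subtype.rTensor W) :=
    Submodule.finsuppSum_mem _ _ _ _ fun i _ ↦ ⟨⟨c i, hmem i⟩ ⊗ₜ b i, rfl⟩
  rwa [hc, ← TensorProduct.equivFinsuppOfBasisRight_symm_apply,
    LinearEquiv.symm_apply_apply] at hsum

lemma mem_range_lTensor_rightMin (v : V ⊗[𝕜] W) :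
    v ∈ LinearMap.range ((rightMin 𝕜 V W v).subtype.lTensor V) := by
  classical
  let b := Module.Basis.ofVectorSpace 𝕜 V
  set c := TensorProduct.equivFinsuppOfBasisLeft b v with hc
  have hmem (i) : c i ∈ rightMin 𝕜 V W v :=
    Submodule.subset_span ⟨b.coord i, (TensorProduct.equivFinsuppOfBasisLeft_apply b v i).symm⟩
  have hsum : c.sum (fun i y ↦ b i ⊗ₜ y) ∈
      LinearMap.range ((rightMin 𝕜 V W v).subtype.lTensor V) :=
    Submodule.finsuppSum_mem _ _ _ _ fun i _ ↦ ⟨b i ⊗ₜ ⟨c i, hmem i⟩, rfl⟩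
  rwa [hc, ← TensorProduct.equivFinsuppOfBasisLeft_symm_apply,
    LinearEquiv.symm_apply_apply] at hsum

lemma rightMin_le_iff {v : V ⊗[𝕜] W} {S : Submodule 𝕜 W} :
    rightMin 𝕜 V W v ≤ S ↔ v ∈ LinearMap.range (S.subtype.lTensor V) := by
  constructor
  · intro h
    exact TensorProduct.range_map_mono le_rfl (by simpa using h) (mem_range_lTensor_rightMin v)
  · rintro ⟨u, rfl⟩
    rw [rightMin, Submodule.span_le]
    rintro _ ⟨ψ, rfl⟩
    rw [lContract_lTensor]
    exact Submodule.coe_mem _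

lemma mem_range_mapIncl_leftMin_rightMin (v : V ⊗[𝕜] W) :
    v ∈ LinearMap.range (TensorProduct.mapIncl (leftMin 𝕜 V W v) (rightMin 𝕜 V W v)) := by
  obtain ⟨u, hu⟩ := mem_range_rTensor_leftMin v
  have hle : rightMin 𝕜 (leftMin 𝕜 V W v) W u ≤ rightMin 𝕜 V W v := by
    rw [rightMin, Submodule.span_le]
    rintro _ ⟨ψ', rfl⟩
    obtain ⟨ψ, rfl⟩ := LinearMap.exists_extend ψ'
    rw [← lContract_rTensor, hu]
    exact Submodule.subset_span ⟨ψ, rfl⟩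
  obtain ⟨t, ht⟩ := mem_range_lTensor_rightMin u
  refine TensorProduct.range_mapIncl_mono le_rfl hle ⟨t, ?_⟩
  calc TensorProduct.mapIncl _ _ t
      = (leftMin 𝕜 V W v).subtype.rTensor W
          ((rightMin 𝕜 (leftMin 𝕜 V W v) W u).subtype.lTensor _ t) := by
        rw [TensorProduct.mapIncl, ← LinearMap.rTensor_comp_lTensor]
        rfl
    _ = v := by rw [ht, hu]

end Contraction

section Decomposition
variable {R M N : Type*} [CommSemiring R] [AddCommMonoid M] [Module R M]
  [AddCommMonoid N] [Module R N]

lemma exists_sum_tmul_basis_of_mem_range_rTensor {ι : Type*} [Fintype ι] {S : Submodule R M}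
    (b : Module.Basis ι R S) {x : M ⊗[R] N} (hx : x ∈ LinearMap.range (S.subtype.rTensor N)) :
    ∃ n : ι → N, x = ∑ i, (b i : M) ⊗ₜ n i := by
  obtain ⟨u, rfl⟩ := hx
  obtain ⟨c, rfl⟩ := TensorProduct.eq_repr_basis_left b u
  refine ⟨c, ?_⟩
  simp [Finsupp.sum_fintype]

lemma exists_sum_tmul_basis_of_mem_range_lTensor {ι : Type*} [Fintype ι] {S : Submodule R N}
    (b : Module.Basis ι R S) {x : M ⊗[R] N} (hx : x ∈ LinearMap.range (S.subtype.lTensor M)) :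
    ∃ m : ι → M, x = ∑ i, m i ⊗ₜ (b i : N) := by
  obtain ⟨u, rfl⟩ := hx
  obtain ⟨c, rfl⟩ := TensorProduct.eq_repr_basis_right b u
  refine ⟨c, ?_⟩
  simp [Finsupp.sum_fintype]

lemma Submodule.exists_finite_le_range_lTensor (P : Submodule R (M ⊗[R] N)) [Module.Finite R P] :
    ∃ S : Submodule R N, Module.Finite R S ∧ P ≤ LinearMap.range (S.subtype.lTensor M) := by
  obtain ⟨t, rfl⟩ := (Module.Finite.iff_fg.1 ‹_› : P.FG)
  obtain ⟨S, hS, ht⟩ := TensorProduct.exists_finite_submodule_right_of_setFinite _ t.finite_toSet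
  exact ⟨S, hS, Submodule.span_le.2 ht⟩

end Decomposition

section
variable {𝕜 A B C : Type*} [Field 𝕜] [AddCommGroup A] [Module 𝕜 A]
  [AddCommGroup B] [Module 𝕜 B] [AddCommGroup C] [Module 𝕜 C]

lemma rContract_rContract_eq_rContract_assoc (β : B →ₗ[𝕜] 𝕜) (φ : C →ₗ[𝕜] 𝕜)
    (v : (A ⊗[𝕜] B) ⊗[𝕜] C) :
    rContract 𝕜 A B β (rContract 𝕜 (A ⊗[𝕜] B) C φ v)
      = rContract 𝕜 A (B ⊗[𝕜] C)
          ((TensorProduct.lid 𝕜 𝕜).toLinearMap ∘ₗ TensorProduct.map β φ)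
          (TensorProduct.assoc 𝕜 A B C v) := by
  induction v using TensorProduct.induction_on with
  | zero => simp
  | tmul t z =>
    induction t using TensorProduct.induction_on with
    | zero => simp
    | tmul x y => simp [smul_smul, mul_comm]
    | add t₁ t₂ h₁ h₂ => simp only [TensorProduct.add_tmul, map_add, h₁, h₂]
  | add v₁ v₂ h₁ h₂ => simp only [map_add, h₁, h₂]

lemma leftMin_rContract_le_minA (v : (A ⊗[𝕜] B) ⊗[𝕜] C) (φ : C →ₗ[𝕜] 𝕜) :
    leftMin 𝕜 A B (rContract 𝕜 (A ⊗[𝕜] B) C φ v) ≤ minA 𝕜 A B C v := by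
  rw [leftMin, Submodule.span_le]
  rintro _ ⟨β, rfl⟩
  rw [rContract_rContract_eq_rContract_assoc]
  exact Submodule.subset_span ⟨_, rfl⟩

lemma rightMin_le_minB {v : (A ⊗[𝕜] B) ⊗[𝕜] C} {w : A ⊗[𝕜] B} (hw : w ∈ minAB 𝕜 A B C v) :
    rightMin 𝕜 A B w ≤ minB 𝕜 A B C v := by
  rw [rightMin, Submodule.span_le]
  rintro _ ⟨ψ, rfl⟩
  have hle : minAB 𝕜 A B C v ≤ (minB 𝕜 A B C v).comap (lContract 𝕜 A B ψ) := by
    rw [minAB, leftMin, Submodule.span_le]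
    rintro _ ⟨φ, rfl⟩
    exact Submodule.subset_span ⟨ψ, φ, rfl⟩
  exact hle hw

lemma minB_le_iff {v : (A ⊗[𝕜] B) ⊗[𝕜] C} {S : Submodule 𝕜 B} :
    minB 𝕜 A B C v ≤ S ↔ minAB 𝕜 A B C v ≤ LinearMap.range (S.subtype.lTensor A) := by
  constructor
  · exact fun h w hw ↦ rightMin_le_iff.1 ((rightMin_le_minB hw).trans h)
  · intro h
    rw [minB, Submodule.span_le]
    rintro _ ⟨ψ, φ, rfl⟩
    exact rightMin_le_iff.2 (h (Submodule.subset_span ⟨φ, rfl⟩)) (Submodule.subset_span ⟨ψ, rfl⟩)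

lemma finiteDimensional_minB (v : (A ⊗[𝕜] B) ⊗[𝕜] C) :
    FiniteDimensional 𝕜 (minB 𝕜 A B C v) := by
  have : FiniteDimensional 𝕜 (minAB 𝕜 A B C v) := finiteDimensional_leftMin v
  obtain ⟨S, hS, hle⟩ := (minAB 𝕜 A B C v).exists_finite_le_range_lTensor
  exact Submodule.finiteDimensional_of_le (minB_le_iff.2 hle)

lemma minAB_le_range_mapIncl (v : (A ⊗[𝕜] B) ⊗[𝕜] C) :
    minAB 𝕜 A B C v ≤
      LinearMap.range (TensorProduct.mapIncl (minA 𝕜 A B C v) (minB 𝕜 A B C v)) := by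
  rw [minAB, leftMin, Submodule.span_le]
  rintro w ⟨φ, rfl⟩
  exact TensorProduct.range_mapIncl_mono (leftMin_rContract_le_minA v φ)
    (rightMin_le_minB (Submodule.subset_span ⟨φ, rfl⟩)) (mem_range_mapIncl_leftMin_rightMin _)

lemma finrank_minAB_le_mul (v : (A ⊗[𝕜] B) ⊗[𝕜] C) :
    Module.finrank 𝕜 (minAB 𝕜 A B C v)
      ≤ Module.finrank 𝕜 (minA 𝕜 A B C v) * Module.finrank 𝕜 (minB 𝕜 A B C v) := by
  have : FiniteDimensional 𝕜 (minA 𝕜 A B C v) := finiteDimensional_leftMin _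
  have := finiteDimensional_minB v
  calc Module.finrank 𝕜 (minAB 𝕜 A B C v)
      ≤ Module.finrank 𝕜 (LinearMap.range
          (TensorProduct.mapIncl (minA 𝕜 A B C v) (minB 𝕜 A B C v))) :=
        Submodule.finrank_mono (minAB_le_range_mapIncl v)
    _ ≤ Module.finrank 𝕜 (minA 𝕜 A B C v ⊗[𝕜] minB 𝕜 A B C v) := LinearMap.finrank_range_le _
    _ = _ := Module.finrank_tensorProduct

lemma finrank_minA_le_mul (v : (A ⊗[𝕜] B) ⊗[𝕜] C) :
    Module.finrank 𝕜 (minA 𝕜 A B C v)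
      ≤ Module.finrank 𝕜 (minAB 𝕜 A B C v) * Module.finrank 𝕜 (minB 𝕜 A B C v) := by
  have : FiniteDimensional 𝕜 (minAB 𝕜 A B C v) := finiteDimensional_leftMin v
  have := finiteDimensional_minB v
  let bAB := Module.finBasis 𝕜 (minAB 𝕜 A B C v)
  let bB := Module.finBasis 𝕜 (minB 𝕜 A B C v)
  obtain ⟨c, hc⟩ := exists_sum_tmul_basis_of_mem_range_rTensor bAB (mem_range_rTensor_leftMin v)
  choose a ha using fun i ↦
    exists_sum_tmul_basis_of_mem_range_lTensor bB (minB_le_iff.1 le_rfl (bAB i).2)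
  have hv : TensorProduct.assoc 𝕜 A B C v
      = ∑ p : _ × _, a p.1 p.2 ⊗ₜ ((bB p.2 : B) ⊗ₜ c p.1) := by
    simp only [hc, ha, map_sum, TensorProduct.sum_tmul, TensorProduct.assoc_tmul,
      Fintype.sum_prod_type]
  have := FiniteDimensional.span_of_finite 𝕜 (Set.finite_range fun p : _ × _ ↦ a p.1 p.2)
  calc Module.finrank 𝕜 (minA 𝕜 A B C v)
      ≤ Module.finrank 𝕜 (Submodule.span 𝕜 (Set.range fun p : _ × _ ↦ a p.1 p.2)) :=
        Submodule.finrank_mono (by rw [minA, hv]; exact leftMin_sum_tmul_le _ _)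
    _ ≤ _ := finrank_range_le_card _
    _ = _ := by simp

/-- **Necessary compatibility conditions for tree-based ranks.**
For `v ∈ A ⊗ B ⊗ C`: (i) `dim U_{AB}(v) ≤ dim U_A(v) · dim U_B(v)`;
(ii) `dim U_A(v) ≤ dim U_{AB}(v) · dim U_B(v)`. -/
theorem finrank_minAB_compatibility (v : (A ⊗[𝕜] B) ⊗[𝕜] C) :
    Module.finrank 𝕜 (minAB 𝕜 A B C v)
      ≤ Module.finrank 𝕜 (minA 𝕜 A B C v) * Module.finrank 𝕜 (minB 𝕜 A B C v) ∧
    Module.finrank 𝕜 (minA 𝕜 A B C v)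
      ≤ Module.finrank 𝕜 (minAB 𝕜 A B C v) * Module.finrank 𝕜 (minB 𝕜 A B C v) := by
  exact ⟨finrank_minAB_le_mul v, finrank_minA_le_mul v⟩

end
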